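/- arXiv:1307.8305 — 2 statements merged into one kernel-verified Lean document; each statement's English description precedes it below -/
import Mathlib

section
/- Let α ∈ R be a feasible point with B(α) ≠ ∅. Then α is optimal (α ∈ R*) if and only if ψ(α) ≤ 0. Equivalently, the exact KKT stopping condition max{(∇f(α))_i : i ∈ I_up(α)} − min{(∇f(α))_j : j ∈ I_down(α)} ≤ 0 holds if and only if α maximizes f over R. -/
/-!
Since `K` is positive semidefinite, `f` is concave, so `f β ≤ f α + ∇f(α)ᵀ(β − α)`. For feasible
`β` the step `d = β − α` sums to zero, is positive only on `I_up(α)` and negative only on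
`I_down(α)`; if `∇f(α)_i ≤ ∇f(α)_j` for all `i ∈ I_up(α)`, `j ∈ I_down(α)`, then with
`b = max_{I_up(α)} ∇f(α)` we get `∇f(α)ᵀd = ∑ (∇f(α)_i − b) d_i ≤ 0`, so `α` is optimal.
Conversely, if `∇f(α)_j < ∇f(α)_i` for such a pair, a short step along `e_i − e_j` stays feasible
and increases `f`. Both `ψ(α) ≤ 0` and the max–min condition are this pairwise condition.
-/

open Matrix Filter Topology ENNReal

namespace SMO

noncomputable section

variable {l : ℕ}

/-- The dual SVM objective `f(α) = yᵀα − (1/2) αᵀKα`. -/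
def obj (y : Fin l → ℝ) (K : Matrix (Fin l) (Fin l) ℝ) (α : Fin l → ℝ) : ℝ :=
  y ⬝ᵥ α - (1 / 2) * (α ⬝ᵥ (K *ᵥ α))

/-- The gradient `∇f(α) = y − Kα`. -/
def grad (y : Fin l → ℝ) (K : Matrix (Fin l) (Fin l) ℝ) (α : Fin l → ℝ) : Fin l → ℝ :=
  y - K *ᵥ α

/-- The direction `v_B = e_i − e_j` of a working set `B = (i, j)`. -/
def dir (B : Fin l × Fin l) : Fin l → ℝ :=
  Pi.single B.1 1 - Pi.single B.2 1

/-- Lower bound `L_i = min {0, y_i C}`. -/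
def lb (y : Fin l → ℝ) (C : ℝ) (i : Fin l) : ℝ := min 0 (y i * C)

/-- Upper bound `U_i = max {0, y_i C}`. -/
def ub (y : Fin l → ℝ) (C : ℝ) (i : Fin l) : ℝ := max 0 (y i * C)

/-- The feasible region `R`. -/
def feas (y : Fin l → ℝ) (C : ℝ) : Set (Fin l → ℝ) :=
  {α | (∑ i, α i) = 0 ∧ ∀ i, lb y C i ≤ α i ∧ α i ≤ ub y C i}

/-- `I_up(α) = {i : α_i < U_i}`. -/
def Iup (y : Fin l → ℝ) (C : ℝ) (α : Fin l → ℝ) : Set (Fin l) := {i | α i < ub y C i}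

/-- `I_down(α) = {i : α_i > L_i}`. -/
def Idown (y : Fin l → ℝ) (C : ℝ) (α : Fin l → ℝ) : Set (Fin l) := {i | lb y C i < α i}

/-- The set `B(α)` of working sets feasible at `α`. -/
def wsets (y : Fin l → ℝ) (C : ℝ) (α : Fin l → ℝ) : Set (Fin l × Fin l) :=
  {B | B.1 ∈ Iup y C α ∧ B.2 ∈ Idown y C α ∧ B.1 ≠ B.2}

/-- The optimal value `f* = max {f(α) : α ∈ R}`. -/
def fstar (y : Fin l → ℝ) (K : Matrix (Fin l) (Fin l) ℝ) (C : ℝ) : ℝ :=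
  sSup (obj y K '' feas y C)

/-- The optimal set `R* = {α ∈ R : f(α) = f*}`. -/
def opt (y : Fin l → ℝ) (K : Matrix (Fin l) (Fin l) ℝ) (C : ℝ) : Set (Fin l → ℝ) :=
  {α ∈ feas y C | obj y K α = fstar y K C}

/-- The gap function `ψ(α) = max {v_Bᵀ ∇f(α) : B ∈ B(α)}`. -/
def psi (y : Fin l → ℝ) (K : Matrix (Fin l) (Fin l) ℝ) (C : ℝ) (α : Fin l → ℝ) : ℝ :=
  sSup ((fun B => dir B ⬝ᵥ grad y K α) '' wsets y C α)

/-- The Newton-step gain `g̃_B(α) = (v_Bᵀ∇f(α))² / (2 v_BᵀKv_B) ∈ [0, ∞]`, with the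
conventions `g̃_B(α) = 0` if `v_BᵀKv_B = 0` and `v_Bᵀ∇f(α) = 0`, and `g̃_B(α) = ∞` if
`v_BᵀKv_B = 0` and `v_Bᵀ∇f(α) ≠ 0`. -/
def ngain (y : Fin l → ℝ) (K : Matrix (Fin l) (Fin l) ℝ) (B : Fin l × Fin l)
    (α : Fin l → ℝ) : ℝ≥0∞ :=
  if dir B ⬝ᵥ (K *ᵥ dir B) = 0 then
    (if dir B ⬝ᵥ grad y K α = 0 then 0 else ⊤)
  else ENNReal.ofReal ((dir B ⬝ᵥ grad y K α) ^ 2 / (2 * (dir B ⬝ᵥ (K *ᵥ dir B))))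

/-- A second-order working set selection: on every non-optimal feasible `α` it returns a
working set `W(α) = (i, j) ∈ B(α)` such that `i` maximizes `(∇f(α))_n` over `n ∈ I_up(α)`
and `j` maximizes `g̃_{(i,n)}(α)` over `n ∈ I_down(α) \ {i}`. -/
def IsSecondOrderWSS (y : Fin l → ℝ) (K : Matrix (Fin l) (Fin l) ℝ) (C : ℝ)
    (W : (Fin l → ℝ) → Fin l × Fin l) : Prop :=
  ∀ α ∈ feas y C \ opt y K C,
    W α ∈ wsets y C α ∧
    (∀ n ∈ Iup y C α, grad y K α n ≤ grad y K α (W α).1) ∧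
    (∀ n ∈ Idown y C α, n ≠ (W α).1 → ngain y K ((W α).1, n) α ≤ ngain y K (W α) α)

lemma dir_dotProduct (B : Fin l × Fin l) (g : Fin l → ℝ) : dir B ⬝ᵥ g = g B.1 - g B.2 := by
  simp [dir, sub_dotProduct, single_dotProduct]

lemma sum_dir (B : Fin l × Fin l) : ∑ k, dir B k = 0 := by
  simp [dir, Finset.sum_sub_distrib]

lemma dotProduct_mulVec_comm_of_isHermitian {K : Matrix (Fin l) (Fin l) ℝ} (hK : K.IsHermitian)
    (u v : Fin l → ℝ) : u ⬝ᵥ K *ᵥ v = v ⬝ᵥ K *ᵥ u := by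
  rw [dotProduct_mulVec, ← vecMul_transpose, ← conjTranspose_eq_transpose_of_trivial, hK.eq,
    dotProduct_comm]

lemma obj_add {K : Matrix (Fin l) (Fin l) ℝ} (hK : K.IsHermitian) (y α d : Fin l → ℝ) :
    obj y K (α + d) = obj y K α + grad y K α ⬝ᵥ d - (1 / 2) * (d ⬝ᵥ K *ᵥ d) := by
  have hsymm := dotProduct_mulVec_comm_of_isHermitian hK α d
  simp only [obj, grad, mulVec_add, dotProduct_add, add_dotProduct, sub_dotProduct]
  rw [dotProduct_comm (K *ᵥ α) d]
  ring_nf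
  linarith

lemma obj_add_smul_dir {K : Matrix (Fin l) (Fin l) ℝ} (hK : K.IsHermitian) (y α : Fin l → ℝ)
    (B : Fin l × Fin l) (t : ℝ) :
    obj y K (α + t • dir B) = obj y K α + t * (grad y K α B.1 - grad y K α B.2)
      - (1 / 2) * t ^ 2 * (dir B ⬝ᵥ K *ᵥ dir B) := by
  rw [obj_add hK, dotProduct_smul, dotProduct_comm, dir_dotProduct, mulVec_smul, smul_dotProduct,
    dotProduct_smul]
  simp only [smul_eq_mul]
  ring

lemma obj_le_add_grad_dotProduct {K : Matrix (Fin l) (Fin l) ℝ} (hK : K.PosSemidef)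
    (y α β : Fin l → ℝ) : obj y K β ≤ obj y K α + grad y K α ⬝ᵥ (β - α) := by
  have hquad : 0 ≤ (β - α) ⬝ᵥ K *ᵥ (β - α) := by
    simpa using hK.dotProduct_mulVec_nonneg (β - α)
  have := obj_add hK.1 y α (β - α)
  rw [add_sub_cancel] at this
  linarith

lemma dotProduct_nonpos_of_sum_eq_zero {ι : Type*} [Fintype ι] {g d : ι → ℝ} (b : ℝ)
    (hd : ∑ i, d i = 0) (hpos : ∀ i, 0 < d i → g i ≤ b) (hneg : ∀ i, d i < 0 → b ≤ g i) :
    g ⬝ᵥ d ≤ 0 := by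
  have hshift : g ⬝ᵥ d = ∑ i, (g i - b) * d i := by
    simp only [dotProduct, sub_mul, Finset.sum_sub_distrib, ← Finset.mul_sum, hd, mul_zero,
      sub_zero]
  rw [hshift]
  refine Finset.sum_nonpos fun i _ => ?_
  rcases lt_trichotomy (d i) 0 with h | h | h
  · exact mul_nonpos_of_nonneg_of_nonpos (by linarith [hneg i h]) h.le
  · simp [h]
  · exact mul_nonpos_of_nonpos_of_nonneg (by linarith [hpos i h]) h.le

lemma csSup_image_le_csInf_image_iff {ι : Type*} [Finite ι] {f : ι → ℝ} {s t : Set ι}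
    (hs : s.Nonempty) (ht : t.Nonempty) :
    sSup (f '' s) ≤ sInf (f '' t) ↔ ∀ i ∈ s, ∀ j ∈ t, f i ≤ f j := by
  rw [csSup_le_iff (Set.toFinite _).bddAbove (hs.image f)]
  simp only [Set.forall_mem_image, le_csInf_iff (Set.toFinite _).bddBelow (ht.image f)]

lemma continuous_obj (y : Fin l → ℝ) (K : Matrix (Fin l) (Fin l) ℝ) : Continuous (obj y K) := by
  unfold obj; fun_prop

lemma feas_subset_Icc (y : Fin l → ℝ) (C : ℝ) : feas y C ⊆ Set.Icc (lb y C) (ub y C) :=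
  fun _ hα => ⟨fun i => (hα.2 i).1, fun i => (hα.2 i).2⟩

lemma bddAbove_obj_image_feas (y : Fin l → ℝ) (K : Matrix (Fin l) (Fin l) ℝ) (C : ℝ) :
    BddAbove (obj y K '' feas y C) :=
  (isCompact_Icc.bddAbove_image (continuous_obj y K).continuousOn).mono
    (Set.image_mono (feas_subset_Icc y C))

def IsKKT (y : Fin l → ℝ) (K : Matrix (Fin l) (Fin l) ℝ) (C : ℝ) (α : Fin l → ℝ) : Prop :=
  ∀ i ∈ Iup y C α, ∀ j ∈ Idown y C α, grad y K α i ≤ grad y K α j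

section

variable {y : Fin l → ℝ} {K : Matrix (Fin l) (Fin l) ℝ} {C : ℝ} {α : Fin l → ℝ}

lemma mem_opt_iff (hα : α ∈ feas y C) :
    α ∈ opt y K C ↔ ∀ β ∈ feas y C, obj y K β ≤ obj y K α := by
  refine ⟨fun hopt β hβ => ?_, fun hmax => ⟨hα, ?_⟩⟩
  · rw [hopt.2]
    exact le_csSup (bddAbove_obj_image_feas y K C) ⟨β, hβ, rfl⟩
  · have hgreatest : IsGreatest (obj y K '' feas y C) (obj y K α) :=
      ⟨⟨α, hα, rfl⟩, Set.forall_mem_image.2 hmax⟩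
    exact hgreatest.csSup_eq.symm

lemma add_smul_dir_mem_feas (hα : α ∈ feas y C) {i j : Fin l} (hij : i ≠ j) {t : ℝ} (ht : 0 ≤ t)
    (hti : α i + t ≤ ub y C i) (htj : lb y C j ≤ α j - t) : α + t • dir (i, j) ∈ feas y C := by
  refine ⟨?_, fun k => ?_⟩
  · simp only [Pi.add_apply, Pi.smul_apply, smul_eq_mul, Finset.sum_add_distrib, hα.1,
      ← Finset.mul_sum, sum_dir, mul_zero, add_zero]
  · obtain ⟨hlb, hub⟩ := hα.2 k
    by_cases hki : k = i
    · subst hki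
      have hk : (α + t • dir (k, j)) k = α k + t := by simp [dir, hij]
      rw [hk]; constructor <;> linarith
    · by_cases hkj : k = j
      · subst hkj
        have hk : (α + t • dir (i, k)) k = α k - t := by simp [dir, hki, sub_eq_add_neg]
        rw [hk]; constructor <;> linarith
      · simp [dir, hki, hkj, hlb, hub]

lemma exists_obj_lt_of_grad_lt (hK : K.IsHermitian) (hα : α ∈ feas y C) {i j : Fin l}
    (hi : i ∈ Iup y C α) (hj : j ∈ Idown y C α) (hlt : grad y K α j < grad y K α i) :
    ∃ β ∈ feas y C, obj y K α < obj y K β := by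
  have hij : i ≠ j := by rintro rfl; exact hlt.false
  set s := grad y K α i - grad y K α j
  set q := dir (i, j) ⬝ᵥ K *ᵥ dir (i, j)
  have hs : 0 < s := sub_pos.2 hlt
  -- a step short enough to stay in the box, and to keep the curvature term below the linear gain
  set t := min (min (ub y C i - α i) (α j - lb y C j)) (s / (|q| + 1))
  have ht : 0 < t :=
    lt_min (lt_min (sub_pos.2 hi) (sub_pos.2 hj)) (div_pos hs (by positivity))
  have hti : t ≤ ub y C i - α i := (min_le_left _ _).trans (min_le_left _ _)
  have htj : t ≤ α j - lb y C j := (min_le_left _ _).trans (min_le_right _ _)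
  have hts : t * (|q| + 1) ≤ s := (le_div_iff₀ (by positivity)).1 (min_le_right _ _)
  refine ⟨α + t • dir (i, j), add_smul_dir_mem_feas hα hij ht.le (by linarith) (by linarith), ?_⟩
  rw [obj_add_smul_dir hK]
  nlinarith [le_abs_self q, mul_pos ht hs, mul_le_mul_of_nonneg_left hts ht.le]

lemma grad_dotProduct_sub_nonpos (hα : α ∈ feas y C) (hup : (Iup y C α).Nonempty)
    (hkkt : IsKKT y K C α) {β : Fin l → ℝ} (hβ : β ∈ feas y C) :
    grad y K α ⬝ᵥ (β - α) ≤ 0 := by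
  have hsum : ∑ i, (β - α) i = 0 := by simp [Finset.sum_sub_distrib, hα.1, hβ.1]
  refine dotProduct_nonpos_of_sum_eq_zero (sSup (grad y K α '' Iup y C α)) hsum
    (fun i hi => ?_) (fun i hi => ?_)
  · have hiup : i ∈ Iup y C α := by
      show α i < ub y C i; linarith [(hβ.2 i).2, Pi.sub_apply β α i]
    exact le_csSup (Set.toFinite _).bddAbove ⟨i, hiup, rfl⟩
  · have hidown : i ∈ Idown y C α := by
      show lb y C i < α i; linarith [(hβ.2 i).1, Pi.sub_apply β α i]
    exact csSup_le (hup.image _) (Set.forall_mem_image.2 fun k hk => hkkt k hk i hidown)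

lemma isKKT_iff_forall_obj_le (hK : K.PosSemidef) (hα : α ∈ feas y C)
    (hup : (Iup y C α).Nonempty) :
    IsKKT y K C α ↔ ∀ β ∈ feas y C, obj y K β ≤ obj y K α := by
  refine ⟨fun hkkt β hβ => ?_, fun hmax i hi j hj => ?_⟩
  · linarith [obj_le_add_grad_dotProduct hK y α β, grad_dotProduct_sub_nonpos hα hup hkkt hβ]
  · by_contra! hlt
    obtain ⟨β, hβ, hgt⟩ := exists_obj_lt_of_grad_lt hK.1 hα hi hj hlt
    exact (hmax β hβ).not_gt hgt

lemma psi_nonpos_iff (hB : (wsets y C α).Nonempty) : psi y K C α ≤ 0 ↔ IsKKT y K C α := by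
  rw [psi, csSup_le_iff (Set.toFinite _).bddAbove (hB.image _), Set.forall_mem_image]
  refine ⟨fun h i hi j hj => ?_, fun h B hB => ?_⟩
  · rcases eq_or_ne i j with rfl | hij
    · rfl
    · simpa [dir_dotProduct] using h (show (i, j) ∈ wsets y C α from ⟨hi, hj, hij⟩)
  · simpa [dir_dotProduct] using h B.1 hB.1 B.2 hB.2.1

end

theorem optimal_iff_gap_nonpos_general
    (y : Fin l → ℝ)
    (K : Matrix (Fin l) (Fin l) ℝ) (hK : K.PosSemidef) (C : ℝ)
    (α : Fin l → ℝ) (hα : α ∈ feas y C) (hB : (wsets y C α).Nonempty) :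
    (α ∈ opt y K C ↔ psi y K C α ≤ 0) ∧
    (sSup (grad y K α '' Iup y C α) - sInf (grad y K α '' Idown y C α) ≤ 0 ↔
      ∀ β ∈ feas y C, obj y K β ≤ obj y K α) := by
  obtain ⟨B, hBup, hBdown, hBne⟩ := hB
  have hmax := isKKT_iff_forall_obj_le hK hα ⟨B.1, hBup⟩
  rw [mem_opt_iff hα, psi_nonpos_iff ⟨B, hBup, hBdown, hBne⟩, sub_nonpos,
    csSup_image_le_csInf_image_iff ⟨B.1, hBup⟩ ⟨B.2, hBdown⟩, ← hmax]
  exact ⟨Iff.rfl, Iff.rfl⟩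

/-- For feasible `α` with `B(α) ≠ ∅`: `α` is optimal iff `ψ(α) ≤ 0`;
equivalently the exact KKT stopping condition
`max {(∇f(α))_i : i ∈ I_up(α)} − min {(∇f(α))_j : j ∈ I_down(α)} ≤ 0`
holds iff `α` maximizes `f` over `R`. -/
theorem optimal_iff_gap_nonpos
    (hl : 2 ≤ l) (y : Fin l → ℝ) (hy : ∀ i, y i = 1 ∨ y i = -1)
    (K : Matrix (Fin l) (Fin l) ℝ) (hK : K.PosSemidef) (C : ℝ) (hC : 0 < C)
    (α : Fin l → ℝ) (hα : α ∈ feas y C) (hB : (wsets y C α).Nonempty) :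
    (α ∈ opt y K C ↔ psi y K C α ≤ 0) ∧
    (sSup (grad y K α '' Iup y C α) - sInf (grad y K α '' Idown y C α) ≤ 0 ↔
      ∀ β ∈ feas y C, obj y K β ≤ obj y K α) :=
  optimal_iff_gap_nonpos_general y K hK C α hα hB

end

end SMO
end

section
/- Let α ∈ ℝ^ℓ and let B₁, B₂ be working sets with Q₂₂ := v_{B₂}ᵀKv_{B₂} > 0. Set w₁ = v_{B₁}ᵀ∇f(α), w₂ = v_{B₂}ᵀ∇f(α), Q₁₁ = v_{B₁}ᵀKv_{B₁}, Q₁₂ = v_{B₁}ᵀKv_{B₂}, and let Q be the 2×2 matrix with rows (Q₁₁, Q₁₂) and (Q₁₂, Q₂₂). Assume det(Q) > 0. Then the function g : ℝ → ℝ, g(μ₁) = f(α + μ₁ v_{B₁} + ((w₂ − Q₁₂ μ₁)/Q₂₂) v_{B₂}) − f(α), attains its maximum at the unique point μ₁ = (Q₂₂ w₁ − Q₁₂ w₂)/det(Q) (the planning-ahead step size). -/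
open Matrix Filter Topology ENNReal

namespace SMO

noncomputable section

variable {l : ℕ}

/-! Since `K` is symmetric, `f(α + μ₁v₁ + μ₂v₂) − f(α)` is the quadratic `quadGain` in the step
sizes, with linear part `(w₁, w₂)` and Hessian `−Q`. The second step `(w₂ − Q₁₂μ₁)/Q₂₂` maximises
it in `μ₂` for fixed `μ₁`; substituting it leaves a parabola in `μ₁` with leading coefficient
`−det Q / (2Q₂₂) < 0` and vertex at the planning-ahead step. -/

theorem _root_.Matrix.IsSymm.dotProduct_mulVec_comm {n R : Type*} [Fintype n] [CommSemiring R]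
    {A : Matrix n n R} (hA : A.IsSymm) (u v : n → R) : u ⬝ᵥ (A *ᵥ v) = v ⬝ᵥ (A *ᵥ u) := by
  rw [dotProduct_mulVec, ← mulVec_transpose, hA.eq, dotProduct_comm]

def quadGain (w₁ w₂ Q₁₁ Q₁₂ Q₂₂ μ₁ μ₂ : ℝ) : ℝ :=
  μ₁ * w₁ + μ₂ * w₂ - (1 / 2) * (μ₁ ^ 2 * Q₁₁ + 2 * μ₁ * μ₂ * Q₁₂ + μ₂ ^ 2 * Q₂₂)

theorem obj_add_smul_add_smul_sub_obj (y : Fin l → ℝ) {K : Matrix (Fin l) (Fin l) ℝ}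
    (hK : K.IsSymm) (α v₁ v₂ : Fin l → ℝ) (μ₁ μ₂ : ℝ) :
    obj y K (α + μ₁ • v₁ + μ₂ • v₂) - obj y K α =
      quadGain (v₁ ⬝ᵥ grad y K α) (v₂ ⬝ᵥ grad y K α) (v₁ ⬝ᵥ (K *ᵥ v₁)) (v₁ ⬝ᵥ (K *ᵥ v₂))
        (v₂ ⬝ᵥ (K *ᵥ v₂)) μ₁ μ₂ := by
  simp only [quadGain, obj, grad, mulVec_add, mulVec_smul, dotProduct_add, add_dotProduct,
    dotProduct_smul, smul_dotProduct, smul_eq_mul, dotProduct_sub]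
  rw [hK.dotProduct_mulVec_comm α v₁, hK.dotProduct_mulVec_comm α v₂,
    hK.dotProduct_mulVec_comm v₂ v₁, dotProduct_comm y v₁, dotProduct_comm y v₂]
  ring

theorem quadGain_optimal_second_step_eq {w₁ w₂ Q₁₁ Q₁₂ Q₂₂ : ℝ} (hQ₂₂ : Q₂₂ ≠ 0)
    (hD : Q₁₁ * Q₂₂ - Q₁₂ * Q₁₂ ≠ 0) (μ m : ℝ)
    (hm : m = (Q₂₂ * w₁ - Q₁₂ * w₂) / (Q₁₁ * Q₂₂ - Q₁₂ * Q₁₂)) :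
    quadGain w₁ w₂ Q₁₁ Q₁₂ Q₂₂ μ ((w₂ - Q₁₂ * μ) / Q₂₂) =
      quadGain w₁ w₂ Q₁₁ Q₁₂ Q₂₂ m ((w₂ - Q₁₂ * m) / Q₂₂) -
        (Q₁₁ * Q₂₂ - Q₁₂ * Q₁₂) / (2 * Q₂₂) * (μ - m) ^ 2 := by
  subst hm
  have hD' : Q₂₂ * Q₁₁ - Q₁₂ ^ 2 ≠ 0 := by rwa [mul_comm, ← sq] at hD
  simp only [quadGain]
  field_simp
  ring

theorem isMax_and_unique_of_eq_sub_mul_sq {g : ℝ → ℝ} {m c : ℝ} (hc : 0 < c)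
    (hg : ∀ x, g x = g m - c * (x - m) ^ 2) :
    (∀ x, g x ≤ g m) ∧ ∀ x, (∀ z, g z ≤ g x) → x = m := by
  refine ⟨fun x => ?_, fun x hx => ?_⟩
  · rw [hg x]
    nlinarith [sq_nonneg (x - m)]
  · have hsq : c * (x - m) ^ 2 ≤ 0 := by linarith [hx m, hg x]
    have : (x - m) ^ 2 = 0 := le_antisymm (nonpos_of_mul_nonpos_right hsq hc) (sq_nonneg _)
    linarith [pow_eq_zero_iff two_ne_zero |>.mp this]

theorem planning_ahead_step_optimal_general
    (y : Fin l → ℝ)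
    (K : Matrix (Fin l) (Fin l) ℝ) (hK : K.PosSemidef)
    (α : Fin l → ℝ) (B₁ B₂ : Fin l × Fin l)
    (w₁ w₂ Q₁₁ Q₁₂ Q₂₂ : ℝ)
    (hw₁ : w₁ = dir B₁ ⬝ᵥ grad y K α)
    (hw₂ : w₂ = dir B₂ ⬝ᵥ grad y K α)
    (hQ₁₁ : Q₁₁ = dir B₁ ⬝ᵥ (K *ᵥ dir B₁))
    (hQ₁₂ : Q₁₂ = dir B₁ ⬝ᵥ (K *ᵥ dir B₂))
    (hQ₂₂ : Q₂₂ = dir B₂ ⬝ᵥ (K *ᵥ dir B₂)) (hQ₂₂pos : 0 < Q₂₂)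
    (hdet : 0 < (!![Q₁₁, Q₁₂; Q₁₂, Q₂₂] : Matrix (Fin 2) (Fin 2) ℝ).det)
    (g : ℝ → ℝ)
    (hg : g = fun μ₁ =>
      obj y K (α + μ₁ • dir B₁ + ((w₂ - Q₁₂ * μ₁) / Q₂₂) • dir B₂) - obj y K α)
    (μpa : ℝ)
    (hμpa : μpa = (Q₂₂ * w₁ - Q₁₂ * w₂) / (!![Q₁₁, Q₁₂; Q₁₂, Q₂₂] : Matrix (Fin 2) (Fin 2) ℝ).det) :
    (∀ μ₁ : ℝ, g μ₁ ≤ g μpa) ∧ (∀ μ₁ : ℝ, (∀ ν : ℝ, g ν ≤ g μ₁) → μ₁ = μpa) := by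
  have hdetQ : (!![Q₁₁, Q₁₂; Q₁₂, Q₂₂] : Matrix (Fin 2) (Fin 2) ℝ).det = Q₁₁ * Q₂₂ - Q₁₂ * Q₁₂ :=
    det_fin_two_of _ _ _ _
  rw [hdetQ] at hdet hμpa
  have hgq : ∀ μ₁, g μ₁ = quadGain w₁ w₂ Q₁₁ Q₁₂ Q₂₂ μ₁ ((w₂ - Q₁₂ * μ₁) / Q₂₂) := fun μ₁ => by
    simp only [hg]
    rw [obj_add_smul_add_smul_sub_obj y (isHermitian_iff_isSymm.mp hK.isHermitian), ← hw₁, ← hw₂,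
      ← hQ₁₁, ← hQ₁₂, ← hQ₂₂]
  refine isMax_and_unique_of_eq_sub_mul_sq (c := (Q₁₁ * Q₂₂ - Q₁₂ * Q₁₂) / (2 * Q₂₂))
    (div_pos hdet (mul_pos two_pos hQ₂₂pos)) fun μ₁ => ?_
  rw [hgq, hgq]
  exact quadGain_optimal_second_step_eq hQ₂₂pos.ne' hdet.ne' μ₁ μpa hμpa

/-- With `Q₂₂ > 0` and `det(Q) > 0`, the two-step gain function
`g(μ₁) = f(α + μ₁v_{B₁} + ((w₂ − Q₁₂μ₁)/Q₂₂)v_{B₂}) − f(α)` attains its maximum at the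
unique point `μ₁ = (Q₂₂w₁ − Q₁₂w₂)/det(Q)` (the planning-ahead step size). -/
theorem planning_ahead_step_optimal
    (hl : 2 ≤ l) (y : Fin l → ℝ) (hy : ∀ i, y i = 1 ∨ y i = -1)
    (K : Matrix (Fin l) (Fin l) ℝ) (hK : K.PosSemidef)
    (α : Fin l → ℝ) (B₁ B₂ : Fin l × Fin l) (hB₁ : B₁.1 ≠ B₁.2) (hB₂ : B₂.1 ≠ B₂.2)
    (w₁ w₂ Q₁₁ Q₁₂ Q₂₂ : ℝ)
    (hw₁ : w₁ = dir B₁ ⬝ᵥ grad y K α)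
    (hw₂ : w₂ = dir B₂ ⬝ᵥ grad y K α)
    (hQ₁₁ : Q₁₁ = dir B₁ ⬝ᵥ (K *ᵥ dir B₁))
    (hQ₁₂ : Q₁₂ = dir B₁ ⬝ᵥ (K *ᵥ dir B₂))
    (hQ₂₂ : Q₂₂ = dir B₂ ⬝ᵥ (K *ᵥ dir B₂)) (hQ₂₂pos : 0 < Q₂₂)
    (hdet : 0 < (!![Q₁₁, Q₁₂; Q₁₂, Q₂₂] : Matrix (Fin 2) (Fin 2) ℝ).det)
    (g : ℝ → ℝ)
    (hg : g = fun μ₁ =>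
      obj y K (α + μ₁ • dir B₁ + ((w₂ - Q₁₂ * μ₁) / Q₂₂) • dir B₂) - obj y K α)
    (μpa : ℝ)
    (hμpa : μpa = (Q₂₂ * w₁ - Q₁₂ * w₂) / (!![Q₁₁, Q₁₂; Q₁₂, Q₂₂] : Matrix (Fin 2) (Fin 2) ℝ).det) :
    (∀ μ₁ : ℝ, g μ₁ ≤ g μpa) ∧ (∀ μ₁ : ℝ, (∀ ν : ℝ, g ν ≤ g μ₁) → μ₁ = μpa) :=
  planning_ahead_step_optimal_general y K hK α B₁ B₂ w₁ w₂ Q₁₁ Q₁₂ Q₂₂ hw₁ hw₂ hQ₁₁ hQ₁₂ hQ₂₂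
    hQ₂₂pos hdet g hg μpa hμpa

end

end SMO
end
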